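/- arXiv:1303.7372 — 5 statements merged into one kernel-verified Lean document; each statement's English description precedes it below -/
import Mathlib

section
/- The constant 1/4 in the main theorem is best possible: for every ε with 0 < ε < 1/4, every δ with 0 < δ ≤ 1, and every natural number n₀, there exist n ≥ n₀ and a 3-uniform hypergraph H on n vertices such that H contains no K₄⁻ as a subgraph (i.e., no four distinct vertices span three or more edges), and yet every subset A of the vertices with |A| ≥ δ·n spans at least (1/4 − ε)·C(|A|,3) edges of H. -/
open Finset
namespace QBP
variable {p : ℕ} [Fact p.Prime]

noncomputable abbrev χ (p : ℕ) [Fact p.Prime] : MulChar (ZMod p) ℤ := quadraticChar (ZMod p)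
def r (a b : ZMod p) : Prop := χ p (b - a) = 1
noncomputable instance : DecidableRel (r (p := p)) := fun _ _ => inferInstanceAs (Decidable (_ = _))
lemma not_r_self (v : ZMod p) : ¬ r v v := by
  simp [r, quadraticChar_zero]

lemma ringChar_ne_two (hp3 : p % 4 = 3) : ringChar (ZMod p) ≠ 2 := by
  rw [ZMod.ringChar_zmod_n]
  omega

lemma chi_neg (hp3 : p % 4 = 3) (x : ZMod p) : χ p (-x) = - χ p x := by
  have h1 : χ p (-1) = -1 := by
    rw [quadraticChar_neg_one (ringChar_ne_two hp3)]
    rw [ZMod.card]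
    exact ZMod.χ₄_nat_three_mod_four hp3
  calc χ p (-x) = χ p (-1 * x) := by ring_nf
  _ = χ p (-1) * χ p x := map_mul _ _ _
  _ = - χ p x := by rw [h1]; ring

lemma r_iff' (hp3 : p % 4 = 3) {a b : ZMod p} : r b a ↔ χ p (b - a) = -1 := by
  have : χ p (a - b) = - χ p (b - a) := by
    rw [show a - b = -(b-a) by ring, chi_neg hp3]
  constructor
  · intro h; unfold r at h; rw [this] at h; linarith
  · intro h; unfold r; rw [this, h]; ring

lemma r_or (hp3 : p % 4 = 3) {a b : ZMod p} (h : a ≠ b) : r a b ∨ r b a := by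
  rcases quadraticChar_dichotomy (a := b - a) (sub_ne_zero.mpr h.symm) with h1 | h1
  · exact Or.inl h1
  · exact Or.inr ((r_iff' hp3).mpr h1)

lemma r_asymm (hp3 : p % 4 = 3) {a b : ZMod p} (h1 : r a b) (h2 : r b a) : False := by
  rw [r_iff' hp3] at h2; unfold r at h1; rw [h1] at h2; norm_num at h2

noncomputable def dg (A : Finset (ZMod p)) (v : ZMod p) : ℕ :=
  (A.filter (fun w => r v w)).card

def IsCyc (e : Finset (ZMod p)) : Prop := ∀ v ∈ e, dg e v = 1
noncomputable instance : DecidablePred (IsCyc (p := p)) := fun _ => Finset.decidableDforallFinset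

lemma erase_eq_union (hp3 : p % 4 = 3) (s : Finset (ZMod p)) (v : ZMod p) :
    s.erase v = s.filter (fun w => r v w) ∪ s.filter (fun w => r w v) := by
  ext w
  simp only [mem_erase, mem_union, mem_filter]
  constructor
  · rintro ⟨hne, hw⟩
    rcases r_or hp3 (Ne.symm hne) with h | h
    · exact Or.inl ⟨hw, h⟩
    · exact Or.inr ⟨hw, h⟩
  · rintro (⟨hw, h⟩ | ⟨hw, h⟩)
    · exact ⟨fun e => not_r_self v (e ▸ h), hw⟩
    · exact ⟨fun e => not_r_self v (e ▸ h), hw⟩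

lemma filter_disj (hp3 : p % 4 = 3) (s : Finset (ZMod p)) (v : ZMod p) :
    Disjoint (s.filter (fun w => r v w)) (s.filter (fun w => r w v)) := by
  rw [Finset.disjoint_left]
  intro w hw1 hw2
  simp only [mem_filter] at hw1 hw2
  exact r_asymm hp3 hw1.2 hw2.2

lemma deg_add_codeg (hp3 : p % 4 = 3) (s : Finset (ZMod p)) (v : ZMod p) (hv : v ∈ s) :
    dg s v + (s.filter (fun w => r w v)).card = s.card - 1 := by
  rw [dg, ← card_union_of_disjoint (filter_disj hp3 s v), ← erase_eq_union hp3,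
    card_erase_of_mem hv]

lemma sum_outdeg (hp3 : p % 4 = 3) (A : Finset (ZMod p)) :
    ∑ v ∈ A, dg A v = A.card.choose 2 := by
  have swap : ∑ v ∈ A, dg A v = ∑ v ∈ A, (A.filter (fun w => r w v)).card := by
    simp only [dg, card_filter]
    rw [Finset.sum_comm]
  have key : ∑ v ∈ A, dg A v + ∑ v ∈ A, dg A v = A.card * (A.card - 1) := by
    nth_rewrite 2 [swap]
    rw [← Finset.sum_add_distrib]
    rw [Finset.sum_congr rfl (fun v hv => deg_add_codeg hp3 A v hv)]
    simp [Finset.sum_const, mul_comm]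
  have := Nat.choose_two_right A.card
  omega

lemma dg_le (e : Finset (ZMod p)) {v : ZMod p} (hv : v ∈ e) : dg e v ≤ e.card - 1 := by
  have h : e.filter (fun w => r v w) ⊆ e.erase v := by
    intro w hw
    simp only [mem_filter] at hw
    exact mem_erase.mpr ⟨fun h => not_r_self v (h ▸ hw.2), hw.1⟩
  calc dg e v ≤ (e.erase v).card := card_le_card h
  _ = e.card - 1 := card_erase_of_mem hv

lemma sum_dg_triple (hp3 : p % 4 = 3) (e : Finset (ZMod p)) (he : e.card = 3) :
    ∑ v ∈ e, dg e v = 3 := by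
  rw [sum_outdeg hp3, he]
  decide

lemma classify (hp3 : p % 4 = 3) (e : Finset (ZMod p)) (he : e.card = 3)
    (hnc : ¬ IsCyc e) : ∃ v ∈ e, dg e v = 2 := by
  by_contra hcon
  push_neg at hcon
  apply hnc
  intro v hv
  have hsum := sum_dg_triple hp3 e he
  have hle : ∀ w ∈ e, dg e w ≤ 1 := by
    intro w hw
    have := dg_le e hw
    have := hcon w hw
    omega
  -- all ≤ 1, sum = 3 = card, so all = 1
  by_contra hne
  have hv0 : dg e v = 0 := by have := hle v hv; omega
  have : ∑ w ∈ e, dg e w ≤ ∑ w ∈ e, 1 - 1 := by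
    rw [← Finset.add_sum_erase _ _ hv, hv0, zero_add]
    calc ∑ w ∈ e.erase v, dg e w ≤ ∑ w ∈ e.erase v, 1 :=
          Finset.sum_le_sum (fun w hw => hle w (mem_of_mem_erase hw))
    _ = e.card - 1 := by rw [Finset.sum_const, smul_eq_mul, mul_one, card_erase_of_mem hv]
    _ = ∑ w ∈ e, 1 - 1 := by rw [Finset.sum_const, smul_eq_mul, mul_one]
  simp only [Finset.sum_const, smul_eq_mul, mul_one, he] at this hsum
  omega

noncomputable def S (A : Finset (ZMod p)) (v : ZMod p) : Finset (Finset (ZMod p)) :=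
  ((A.filter (fun w => r v w)).powersetCard 2).image (insert v)

lemma card_S (A : Finset (ZMod p)) (v : ZMod p) : (S A v).card = (dg A v).choose 2 := by
  have hinj : Set.InjOn (insert v) (((A.filter (fun w => r v w)).powersetCard 2 : Finset (Finset (ZMod p))) : Set (Finset (ZMod p))) := by
    intro q1 h1 q2 h2 heq
    simp only [Finset.mem_coe, Finset.mem_powersetCard] at h1 h2
    have hv1 : v ∉ q1 := fun h => not_r_self v (mem_filter.mp (h1.1 h)).2
    have hv2 : v ∉ q2 := fun h => not_r_self v (mem_filter.mp (h2.1 h)).2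
    rw [← Finset.erase_insert hv1, ← Finset.erase_insert hv2, heq]
  rw [S, Finset.card_image_of_injOn hinj, card_powersetCard]
  rfl

lemma mem_S {A e : Finset (ZMod p)} {v : ZMod p} :
    e ∈ S A v ↔ ∃ q, q ⊆ A.filter (fun w => r v w) ∧ q.card = 2 ∧ e = insert v q := by
  simp only [S, Finset.mem_image, Finset.mem_powersetCard]
  constructor
  · rintro ⟨q, ⟨h1, h2⟩, h3⟩; exact ⟨q, h1, h2, h3.symm⟩
  · rintro ⟨q, h1, h2, h3⟩; exact ⟨q, ⟨h1, h2⟩, h3.symm⟩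

lemma mem_S_iff (hp3 : p % 4 = 3) {A e : Finset (ZMod p)} {v : ZMod p}
    (he3 : e.card = 3) (heA : e ⊆ A) :
    e ∈ S A v ↔ v ∈ e ∧ dg e v = 2 := by
  constructor
  · rintro h
    obtain ⟨q, hq1, hq2, rfl⟩ := mem_S.mp h
    have hvq : v ∉ q := fun h => not_r_self v (mem_filter.mp (hq1 h)).2
    refine ⟨mem_insert_self v q, ?_⟩
    have : (insert v q).filter (fun w => r v w) = q := by
      ext w
      simp only [mem_filter, mem_insert]
      constructor
      · rintro ⟨h1 | h1, h2⟩
        · exact absurd h2 (h1 ▸ not_r_self v)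
        · exact h1
      · intro hw; exact ⟨Or.inr hw, (mem_filter.mp (hq1 hw)).2⟩
    rw [dg, this, hq2]
  · rintro ⟨hve, hdg⟩
    rw [mem_S]
    refine ⟨e.filter (fun w => r v w), ?_, hdg, ?_⟩
    · intro w hw
      simp only [mem_filter] at hw ⊢
      exact ⟨heA hw.1, hw.2⟩
    · -- e = insert v (filter ...)
      have hsub : e.filter (fun w => r v w) ⊆ e.erase v := by
        intro w hw
        simp only [mem_filter] at hw
        exact mem_erase.mpr ⟨fun h => not_r_self v (h ▸ hw.2), hw.1⟩
      have hcard : (e.erase v).card = 2 := by rw [card_erase_of_mem hve, he3]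
      have : e.filter (fun w => r v w) = e.erase v :=
        Finset.eq_of_subset_of_card_le hsub (by rw [hcard]; exact hdg.ge)
      rw [this, Finset.insert_erase hve]

lemma transitive_eq_biUnion (hp3 : p % 4 = 3) (A : Finset (ZMod p)) :
    (A.powersetCard 3).filter (fun e => ¬ IsCyc e) = A.biUnion (S A) := by
  ext e
  simp only [mem_filter, mem_powersetCard, mem_biUnion]
  constructor
  · rintro ⟨⟨heA, he3⟩, hnc⟩
    obtain ⟨v, hve, hdg⟩ := classify hp3 e he3 hnc
    exact ⟨v, heA hve, (mem_S_iff hp3 he3 heA).mpr ⟨hve, hdg⟩⟩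
  · rintro ⟨v, hvA, hS⟩
    obtain ⟨q, hq1, hq2, rfl⟩ := mem_S.mp hS
    have hvq : v ∉ q := fun h => not_r_self v (mem_filter.mp (hq1 h)).2
    have he3 : (insert v q).card = 3 := by rw [card_insert_of_notMem hvq, hq2]
    have heA : insert v q ⊆ A := by
      apply insert_subset hvA
      exact hq1.trans (filter_subset _ _)
    refine ⟨⟨heA, he3⟩, ?_⟩
    intro hcyc
    have := hcyc v (mem_insert_self v q)
    have : dg (insert v q) v = 2 := ((mem_S_iff hp3 he3 heA).mp hS).2
    omega

lemma S_disjoint (hp3 : p % 4 = 3) (A : Finset (ZMod p)) :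
    ∀ v ∈ A, ∀ w ∈ A, v ≠ w → Disjoint (S A v) (S A w) := by
  intro v hvA w hwA hvw
  rw [Finset.disjoint_left]
  intro e hev hew
  obtain ⟨q, hq1, hq2, he⟩ := mem_S.mp hev
  have hvq : v ∉ q := fun h => not_r_self v (mem_filter.mp (hq1 h)).2
  have he3 : e.card = 3 := by rw [he, card_insert_of_notMem hvq, hq2]
  have heA : e ⊆ A := by
    rw [he]
    exact insert_subset hvA (hq1.trans (filter_subset _ _))
  obtain ⟨hve, hdv⟩ := (mem_S_iff hp3 he3 heA).mp hev
  obtain ⟨hwe, hdw⟩ := (mem_S_iff hp3 he3 heA).mp hew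
  have hsum := sum_dg_triple hp3 e he3
  have hpair : ({v, w} : Finset (ZMod p)) ⊆ e := by
    intro x hx
    rcases mem_insert.mp hx with rfl | hx
    · exact hve
    · exact (mem_singleton.mp hx) ▸ hwe
  have : ∑ x ∈ ({v, w} : Finset (ZMod p)), dg e x ≤ ∑ x ∈ e, dg e x :=
    Finset.sum_le_sum_of_subset hpair
  rw [Finset.sum_pair hvw, hdv, hdw, hsum] at this
  omega

lemma card_transitive (hp3 : p % 4 = 3) (A : Finset (ZMod p)) :
    ((A.powersetCard 3).filter (fun e => ¬ IsCyc e)).card = ∑ v ∈ A, (dg A v).choose 2 := by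
  rw [transitive_eq_biUnion hp3, Finset.card_biUnion (S_disjoint hp3 A)]
  exact Finset.sum_congr rfl (fun v _ => card_S A v)

lemma count_id (hp3 : p % 4 = 3) (A : Finset (ZMod p)) :
    ((A.powersetCard 3).filter IsCyc).card + ∑ v ∈ A, (dg A v).choose 2 = A.card.choose 3 := by
  rw [← card_transitive hp3, Finset.card_filter_add_card_filter_not, card_powersetCard]

noncomputable def Edges (p : ℕ) [Fact p.Prime] : Finset (Finset (ZMod p)) :=
  ((Finset.univ : Finset (ZMod p)).powersetCard 3).filter IsCyc

lemma edges_filter (A : Finset (ZMod p)) :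
    (Edges p).filter (fun e => e ⊆ A) = (A.powersetCard 3).filter IsCyc := by
  ext e
  simp only [Edges, mem_filter, mem_powersetCard, subset_univ, true_and]
  tauto

lemma le_one_add_choose (n : ℕ) : n ≤ 1 + n.choose 2 := by
  induction n with
  | zero => simp
  | succ k ih =>
    rw [Nat.choose_succ_succ, Nat.choose_one_right]
    omega

lemma k4free (hp3 : p % 4 = 3) (s : Finset (ZMod p)) (hs : s.card = 4) :
    ((Edges p).filter (fun e => e ⊆ s)).card < 3 := by
  rw [edges_filter]
  have hid := count_id hp3 s
  rw [hs] at hid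
  have hsum : ∑ v ∈ s, dg s v = 6 := by rw [sum_outdeg hp3, hs]; decide
  have hle : ∑ v ∈ s, dg s v ≤ ∑ v ∈ s, (1 + (dg s v).choose 2) :=
    Finset.sum_le_sum (fun v _ => le_one_add_choose (dg s v))
  rw [Finset.sum_add_distrib, Finset.sum_const, smul_eq_mul, mul_one, hs, hsum] at hle
  have : (4 : ℕ).choose 3 = 4 := by decide
  omega

lemma chi_sq (x : ZMod p) : (χ p x)^2 = if x = 0 then 0 else 1 := by
  split_ifs with h
  · rw [h, quadraticChar_zero]; ring
  · exact quadraticChar_sq_one h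

lemma sum_chi_sq (hp3 : p % 4 = 3) : ∑ x : ZMod p, (χ p x)^2 = (p : ℤ) - 1 := by
  have h : ∀ x : ZMod p, (if x = 0 then (0:ℤ) else 1) = 1 - (if x = 0 then 1 else 0) := by
    intro x; split_ifs <;> ring
  simp only [chi_sq, h]
  rw [Finset.sum_sub_distrib, Finset.sum_const, Finset.sum_ite_eq' Finset.univ (0 : ZMod p)
    (fun _ => (1:ℤ))]
  simp [ZMod.card]

lemma cross (hp3 : p % 4 = 3) {c : ZMod p} (hc : c ≠ 0) :
    ∑ x : ZMod p, χ p x * χ p (x + c) = -1 := by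
  have key : ∀ x ∈ (Finset.univ : Finset (ZMod p)).erase 0,
      χ p x * χ p (x + c) = χ p (1 + c * x⁻¹) := by
    intro x hx
    have hx0 : x ≠ 0 := (mem_erase.mp hx).1
    have : x * (x + c) = x^2 * (1 + c * x⁻¹) := by field_simp
    calc χ p x * χ p (x + c) = χ p (x * (x + c)) := (map_mul _ _ _).symm
    _ = χ p (x^2 * (1 + c * x⁻¹)) := by rw [this]
    _ = χ p (x^2) * χ p (1 + c * x⁻¹) := map_mul _ _ _
    _ = χ p (1 + c * x⁻¹) := by rw [quadraticChar_sq_one' hx0, one_mul]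
  have h0 : χ p 0 * χ p (0 + c) = 0 := by rw [quadraticChar_zero]; ring
  rw [← Finset.add_sum_erase _ _ (mem_univ (0 : ZMod p)), h0, zero_add]
  rw [Finset.sum_congr rfl key]
  have hbij : ∑ x ∈ (Finset.univ : Finset (ZMod p)).erase 0, χ p (1 + c * x⁻¹)
      = ∑ y ∈ (Finset.univ : Finset (ZMod p)).erase 1, χ p y := by
    apply Finset.sum_nbij' (i := fun x => 1 + c * x⁻¹) (j := fun y => c * (y - 1)⁻¹)
    · intro a ha
      have ha0 : a ≠ 0 := (mem_erase.mp ha).1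
      refine mem_erase.mpr ⟨?_, mem_univ _⟩
      intro h
      have : c * a⁻¹ = 0 := by linear_combination h
      rcases mul_eq_zero.mp this with h | h
      · exact hc h
      · exact ha0 (inv_eq_zero.mp h)
    · intro b hb
      have hb1 : b ≠ 1 := (mem_erase.mp hb).1
      refine mem_erase.mpr ⟨?_, mem_univ _⟩
      intro h
      rcases mul_eq_zero.mp h with h | h
      · exact hc h
      · exact hb1 (by have := inv_eq_zero.mp h; linear_combination this)
    · intro a ha
      have ha0 : a ≠ 0 := (mem_erase.mp ha).1
      field_simp
      rw [add_sub_cancel_left, div_self hc]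
    · intro b hb
      have hb1 : b ≠ 1 := (mem_erase.mp hb).1
      have : b - 1 ≠ 0 := sub_ne_zero.mpr hb1
      field_simp
      ring
    · intro a _; rfl
  rw [hbij]
  have h0 := quadraticChar_sum_zero (F := ZMod p) (ringChar_ne_two hp3)
  have h1 : ∑ y ∈ (Finset.univ : Finset (ZMod p)).erase 1, χ p y + χ p 1
      = ∑ y : ZMod p, χ p y := Finset.sum_erase_add _ _ (mem_univ 1)
  have h2 : χ p 1 = 1 := map_one _
  rw [h0, h2] at h1
  linarith


lemma Tlem (hp3 : p % 4 = 3) (a b : ZMod p) :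
    ∑ v : ZMod p, χ p (a - v) * χ p (b - v)
      = if b = a then (p : ℤ) - 1 else -1 := by
  have hre : ∑ v : ZMod p, χ p (a - v) * χ p (b - v)
      = ∑ x : ZMod p, χ p x * χ p (x + (b - a)) := by
    apply Finset.sum_nbij' (i := fun v => a - v) (j := fun x => a - x)
    · intro v _; exact mem_univ _
    · intro x _; exact mem_univ _
    · intro v _; ring
    · intro x _; ring
    · intro v _; ring_nf
  rw [hre]
  split_ifs with h
  · subst h
    simp only [sub_self, add_zero, ← pow_two]
    exact sum_chi_sq hp3
  · exact cross hp3 (sub_ne_zero.mpr h)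

noncomputable def ev (A : Finset (ZMod p)) (v : ZMod p) : ℤ := ∑ w ∈ A, χ p (w - v)

lemma two_dg (hp3 : p % 4 = 3) {A : Finset (ZMod p)} {v : ZMod p} (hv : v ∈ A) :
    2 * (dg A v : ℤ) = (A.card : ℤ) - 1 + ev A v := by
  have hsplit : ev A v = ∑ w ∈ A.erase v, χ p (w - v) := by
    rw [ev, ← Finset.add_sum_erase _ _ hv, sub_self, quadraticChar_zero, zero_add]
  rw [hsplit, erase_eq_union hp3 A v, Finset.sum_union (filter_disj hp3 A v)]
  have h1 : ∑ w ∈ A.filter (fun w => r v w), χ p (w - v)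
      = (dg A v : ℤ) := by
    have e1 : ∑ w ∈ A.filter (fun w => r v w), χ p (w - v)
        = ∑ _w ∈ A.filter (fun w => r v w), (1:ℤ) :=
      Finset.sum_congr rfl (fun w hw => (mem_filter.mp hw).2)
    rw [e1, Finset.sum_const, nsmul_eq_mul, mul_one, dg]
  have h2 : ∑ w ∈ A.filter (fun w => r w v), χ p (w - v)
      = -((A.filter (fun w => r w v)).card : ℤ) := by
    have : ∀ w ∈ A.filter (fun w => r w v), χ p (w - v) = -1 := by
      intro w hw
      exact (r_iff' hp3).mp (mem_filter.mp hw).2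
    have e2 : ∑ w ∈ A.filter (fun w => r w v), χ p (w - v)
        = ∑ _w ∈ A.filter (fun w => r w v), (-1:ℤ) :=
      Finset.sum_congr rfl this
    rw [e2, Finset.sum_const, nsmul_eq_mul]
    ring
  rw [h1, h2]
  have hd := deg_add_codeg hp3 A v hv
  have hc : 1 ≤ A.card := Finset.card_pos.mpr ⟨v, hv⟩
  have : (dg A v : ℤ) + ((A.filter (fun w => r w v)).card : ℤ) = (A.card : ℤ) - 1 := by
    have := hd
    push_cast [← this]
    omega
  linarith

lemma sum_ev (hp3 : p % 4 = 3) (A : Finset (ZMod p)) : ∑ v ∈ A, ev A v = 0 := by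
  have key : ∑ v ∈ A, ev A v = - ∑ v ∈ A, ev A v := by
    calc ∑ v ∈ A, ev A v = ∑ v ∈ A, ∑ w ∈ A, χ p (w - v) := rfl
    _ = ∑ w ∈ A, ∑ v ∈ A, χ p (w - v) := Finset.sum_comm
    _ = ∑ w ∈ A, ∑ v ∈ A, -χ p (v - w) := by
        apply Finset.sum_congr rfl; intro w _
        apply Finset.sum_congr rfl; intro v _
        rw [show w - v = -(v - w) by ring, chi_neg hp3]
    _ = ∑ w ∈ A, -(ev A w) := by
        apply Finset.sum_congr rfl; intro w _
        rw [ev, ← Finset.sum_neg_distrib]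
    _ = - ∑ w ∈ A, ev A w := Finset.sum_neg_distrib _
  linarith

lemma sum_ev_sq (hp3 : p % 4 = 3) (A : Finset (ZMod p)) :
    ∑ v ∈ A, (ev A v)^2 ≤ (A.card : ℤ) * p := by
  have hnn : ∀ v ∈ (Finset.univ : Finset (ZMod p)) , 0 ≤ (ev A v)^2 := fun v _ => sq_nonneg _
  have hsub : ∑ v ∈ A, (ev A v)^2 ≤ ∑ v : ZMod p, (ev A v)^2 :=
    Finset.sum_le_sum_of_subset_of_nonneg (Finset.subset_univ A)
      (fun v _ _ => sq_nonneg _)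
  have hexp : ∑ v : ZMod p, (ev A v)^2
      = ∑ a ∈ A, ∑ b ∈ A, (if b = a then (p:ℤ)-1 else -1) := by
    have e1 : ∀ v, (ev A v)^2 = ∑ a ∈ A, ∑ b ∈ A, χ p (a - v) * χ p (b - v) := by
      intro v; rw [ev, pow_two, Finset.sum_mul_sum]
    simp only [e1]
    rw [Finset.sum_comm]
    refine Finset.sum_congr rfl (fun a _ => ?_)
    rw [Finset.sum_comm]
    exact Finset.sum_congr rfl (fun b _ => Tlem hp3 a b)
  have hin : ∀ a ∈ A, ∑ b ∈ A, (if b = a then (p:ℤ)-1 else -1) = (p:ℤ) - A.card := by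
    intro a ha
    have hb : ∀ b, (if b = a then (p:ℤ)-1 else -1) = -1 + (if b = a then (p:ℤ) else 0) := by
      intro b; split_ifs <;> ring
    simp only [hb]
    rw [Finset.sum_add_distrib, Finset.sum_const, Finset.sum_ite_eq' A a (fun _ => (p:ℤ)),
      if_pos ha, nsmul_eq_mul]
    ring
  rw [Finset.sum_congr rfl hin, Finset.sum_const, nsmul_eq_mul] at hexp
  have hk0 : (0:ℤ) ≤ (A.card : ℤ) := by positivity
  nlinarith [hsub, hexp, sq_nonneg ((A.card : ℤ))]

lemma choose2_int (n : ℕ) : ((n.choose 2 : ℕ) : ℤ) * 2 = (n:ℤ) * ((n:ℤ) - 1) := by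
  induction n with
  | zero => simp
  | succ k ih =>
    rw [Nat.choose_succ_succ, Nat.choose_one_right]
    push_cast
    push_cast at ih
    ring_nf
    ring_nf at ih
    linarith

lemma choose3_int (n : ℕ) : ((n.choose 3 : ℕ) : ℤ) * 6 = (n:ℤ) * ((n:ℤ) - 1) * ((n:ℤ) - 2) := by
  induction n with
  | zero => simp
  | succ k ih =>
    rw [Nat.choose_succ_succ]
    have h2 := choose2_int k
    push_cast
    push_cast at ih h2
    ring_nf
    ring_nf at ih h2
    linarith

lemma cyc_lower (hp3 : p % 4 = 3) (A : Finset (ZMod p)) :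
    (A.card : ℤ) * ((A.card : ℤ)^2 - 1) - 3 * (A.card : ℤ) * (p : ℤ)
      ≤ 24 * (((A.powersetCard 3).filter IsCyc).card : ℤ) := by
  set k : ℤ := (A.card : ℤ) with hk
  set C : ℤ := (((A.powersetCard 3).filter IsCyc).card : ℤ) with hC
  set D1 : ℤ := ∑ v ∈ A, (dg A v : ℤ) with hD1
  set D2 : ℤ := ∑ v ∈ A, (dg A v : ℤ)^2 with hD2
  set C2 : ℤ := ∑ v ∈ A, ((dg A v).choose 2 : ℤ) with hC2
  set E2 : ℤ := ∑ v ∈ A, (ev A v)^2 with hE2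
  -- f1 : 4*D2 = k*(k-1)^2 + E2
  have f1 : 4 * D2 = k * (k-1)^2 + E2 := by
    have hv : ∀ v ∈ A, 4 * (dg A v : ℤ)^2 = ((k - 1) + ev A v)^2 := by
      intro v hv
      have := two_dg hp3 hv
      nlinarith [this]
    have : ∑ v ∈ A, 4 * (dg A v : ℤ)^2 = ∑ v ∈ A, ((k-1)^2 + 2*(k-1)*(ev A v) + (ev A v)^2) := by
      refine Finset.sum_congr rfl (fun v hva => ?_)
      rw [hv v hva]; ring
    rw [← Finset.mul_sum] at this
    rw [hD2, this, Finset.sum_add_distrib, Finset.sum_add_distrib, Finset.sum_const,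
      ← Finset.mul_sum, sum_ev hp3]
    rw [nsmul_eq_mul, ← hE2, ← hk]
    ring
  have f2 : 2 * C2 = D2 - D1 := by
    rw [hC2, hD2, hD1, Finset.mul_sum, ← Finset.sum_sub_distrib]
    refine Finset.sum_congr rfl (fun v _ => ?_)
    have := choose2_int (dg A v)
    push_cast at this ⊢
    nlinarith [this]
  have f3 : 2 * D1 = k * (k - 1) := by
    have hs : ∑ v ∈ A, dg A v = A.card.choose 2 := sum_outdeg hp3 A
    have : D1 = ((A.card.choose 2 : ℕ) : ℤ) := by
      rw [hD1, ← Nat.cast_sum, hs]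
    rw [this]
    have := choose2_int A.card
    linarith
  have f4 : C + C2 = ((A.card.choose 3 : ℕ) : ℤ) := by
    have := count_id hp3 A
    rw [hC, hC2, ← Nat.cast_sum, ← Nat.cast_add, this]
  have f4b : 6 * (C + C2) = k * (k-1) * (k-2) := by
    rw [f4]
    have := choose3_int A.card
    linarith
  have f5 : E2 ≤ k * (p : ℤ) := sum_ev_sq hp3 A
  nlinarith [f1, f2, f3, f4b, f5]

lemma filter_image_card {α β : Type*} [DecidableEq α] [DecidableEq β] (σ : α ≃ β)
    (E : Finset (Finset α)) (s : Finset β) :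
    ((E.image (fun e => e.image σ)).filter (fun e => e ⊆ s)).card
      = (E.filter (fun e => e ⊆ s.image σ.symm)).card := by
  have hset : (E.image (fun e => e.image σ)).filter (fun e => e ⊆ s)
      = (E.filter (fun e => e ⊆ s.image σ.symm)).image (fun e => e.image σ) := by
    ext f
    simp only [mem_filter, Finset.mem_image]
    constructor
    · rintro ⟨⟨e, he, rfl⟩, hsub⟩
      refine ⟨e, ⟨he, ?_⟩, rfl⟩
      intro x hx
      have : σ x ∈ s := hsub (Finset.mem_image_of_mem σ hx)
      have : σ.symm (σ x) ∈ s.image σ.symm := Finset.mem_image_of_mem σ.symm this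
      rwa [Equiv.symm_apply_apply] at this
    · rintro ⟨e, ⟨he, hsub⟩, rfl⟩
      refine ⟨⟨e, he, rfl⟩, ?_⟩
      intro y hy
      obtain ⟨x, hx, rfl⟩ := Finset.mem_image.mp hy
      obtain ⟨z, hz, hzx⟩ := Finset.mem_image.mp (hsub hx)
      rw [← hzx, Equiv.apply_symm_apply]
      exact hz
  rw [hset, Finset.card_image_of_injective _ (Finset.image_injective σ.injective)]

end QBP

lemma final_real {ε δ Kr Pr Cr ch : ℝ} (hε : 0 < ε) (hδ : 0 < δ)
    (hA : δ * Pr ≤ Kr) (hδp : 4 ≤ δ * Pr) (hεδp : 3 ≤ ε * δ^2 * Pr) (hP0 : 0 < Pr)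
    (hCR : Kr * (Kr^2 - 1) - 3 * Kr * Pr ≤ 24 * Cr)
    (hch : 6 * ch = Kr * (Kr - 1) * (Kr - 2)) :
    (1/4 - ε) * ch ≤ Cr := by
  have hK4 : 4 ≤ Kr := le_trans hδp hA
  have hK0 : (0:ℝ) < Kr := by linarith
  have h1 : δ * Pr / 2 ≤ Kr - 1 := by linarith
  have h2 : δ * Pr / 2 ≤ Kr - 2 := by linarith
  have hδp0 : 0 ≤ δ * Pr / 2 := by linarith
  have e2 : (δ*Pr/2) * (δ*Pr/2) ≤ (Kr-1)*(Kr-2) := mul_le_mul h1 h2 hδp0 (by linarith)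
  have e1 : 3 * Pr ≤ ε * δ^2 * Pr^2 := by nlinarith
  have key : 3 * Pr ≤ 3*(Kr-1) + 4*ε*((Kr-1)*(Kr-2)) := by nlinarith
  have key2 : 3*Kr*Pr ≤ Kr * (3*(Kr-1) + 4*ε*((Kr-1)*(Kr-2))) := by
    have h := mul_le_mul_of_nonneg_left key hK0.le
    nlinarith [h]
  have hch2 : 6 * (ε * ch) = ε * (Kr * (Kr-1) * (Kr-2)) := by rw [← hch]; ring
  nlinarith [hCR, key2, hch, hch2]

/-- The constant 1/4 in the main theorem is best possible: for every
`0 < ε < 1/4`, every `0 < δ ≤ 1` and every `n₀`, there is an `n ≥ n₀` and a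
3-uniform hypergraph on `n` vertices containing no `K₄⁻` (no four vertices
span three or more edges) in which every vertex subset `A` with `|A| ≥ δ·n`
spans at least `(1/4 − ε)·C(|A|,3)` edges. -/
theorem quarter_is_best_possible :
    ∀ ε : ℝ, 0 < ε → ε < 1 / 4 →
    ∀ δ : ℝ, 0 < δ → δ ≤ 1 →
    ∀ n₀ : ℕ, ∃ n : ℕ, n₀ ≤ n ∧
      ∃ E : Finset (Finset (Fin n)),
        (∀ e ∈ E, e.card = 3) ∧
        (∀ s : Finset (Fin n), s.card = 4 →
          (E.filter (fun e => e ⊆ s)).card < 3) ∧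
        (∀ A : Finset (Fin n), δ * n ≤ (A.card : ℝ) →
          (1 / 4 - ε) * (A.card.choose 3 : ℝ) ≤
            ((E.filter (fun e => e ⊆ A)).card : ℝ)) := by
  intro ε hε hε4 δ hδ hδ1 n₀
  -- choose a large prime p ≡ 3 (mod 4)
  set N := max n₀ (⌈(4:ℝ)/δ⌉₊ + ⌈(3:ℝ)/(ε*δ^2)⌉₊) with hN
  have hunit : IsUnit (3 : ZMod 4) := by decide
  obtain ⟨p, hpN, hp, hpmod⟩ := Nat.forall_exists_prime_gt_and_eq_mod hunit N
  have hp3 : p % 4 = 3 := by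
    have h1 : (p : ZMod 4).val = p % 4 := ZMod.val_natCast 4 p
    rw [hpmod] at h1
    exact h1.symm
  haveI : Fact p.Prime := ⟨hp⟩
  haveI : NeZero p := ⟨hp.pos.ne'⟩
  have hcard : Fintype.card (ZMod p) = p := ZMod.card p
  -- basic real facts about p
  have hPn : (N : ℝ) < (p : ℝ) := by exact_mod_cast hpN
  have hδp : 4 ≤ δ * p := by
    have h1 : ((⌈(4:ℝ)/δ⌉₊ : ℕ) : ℝ) ≤ p := by
      have : ⌈(4:ℝ)/δ⌉₊ ≤ N := le_max_of_le_right (Nat.le_add_right _ _)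
      have := this.trans hpN.le
      exact_mod_cast this
    have h2 : (4:ℝ)/δ ≤ p := (Nat.le_ceil _).trans h1
    calc (4:ℝ) = δ * (4/δ) := by field_simp
    _ ≤ δ * p := by apply mul_le_mul_of_nonneg_left h2 hδ.le
  have hεδp : 3 ≤ ε * δ^2 * p := by
    have h1 : ((⌈(3:ℝ)/(ε*δ^2)⌉₊ : ℕ) : ℝ) ≤ p := by
      have : ⌈(3:ℝ)/(ε*δ^2)⌉₊ ≤ N := le_max_of_le_right (Nat.le_add_left _ _)
      have := this.trans hpN.le
      exact_mod_cast this
    have h2 : (3:ℝ)/(ε*δ^2) ≤ p := (Nat.le_ceil _).trans h1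
    have hpos : 0 < ε * δ^2 := by positivity
    calc (3:ℝ) = (ε*δ^2) * (3/(ε*δ^2)) := by field_simp
    _ ≤ (ε*δ^2) * p := by apply mul_le_mul_of_nonneg_left h2 hpos.le
  refine ⟨p, (le_max_left _ _).trans hpN.le, ?_⟩
  -- transport the edge set to Fin p
  let σ : ZMod p ≃ Fin p := Fintype.equivFinOfCardEq hcard
  refine ⟨(QBP.Edges p).image (fun e => e.image σ), ?_, ?_, ?_⟩
  · -- all edges have 3 vertices
    intro f hf
    obtain ⟨e, he, rfl⟩ := Finset.mem_image.mp hf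
    rw [Finset.card_image_of_injective _ σ.injective]
    simp only [QBP.Edges, Finset.mem_filter, Finset.mem_powersetCard] at he
    exact he.1.2
  · -- K4-free
    intro s hs
    rw [QBP.filter_image_card σ]
    apply QBP.k4free hp3
    rw [Finset.card_image_of_injective _ σ.symm.injective, hs]
  · -- density
    intro A hA
    rw [QBP.filter_image_card σ]
    set B := A.image σ.symm with hB
    have hBcard : B.card = A.card := Finset.card_image_of_injective _ σ.symm.injective
    rw [QBP.edges_filter]
    -- integer lower bound
    have hZ := QBP.cyc_lower hp3 B
    set C : ℕ := ((B.powersetCard 3).filter QBP.IsCyc).card with hCdef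
    set K : ℝ := (A.card : ℝ) with hK
    have hCR : K * (K^2 - 1) - 3 * K * p ≤ 24 * (C : ℝ) := by
      rw [hK, ← hBcard]
      exact_mod_cast hZ
    have hch : 6 * ((A.card.choose 3 : ℕ) : ℝ) = K * (K - 1) * (K - 2) := by
      have h := QBP.choose3_int A.card
      have hR : ((A.card.choose 3 : ℕ):ℝ)*6 = (A.card:ℝ)*((A.card:ℝ)-1)*((A.card:ℝ)-2) := by
        exact_mod_cast h
      rw [hK]
      linarith
    have hkP : K ≤ (p : ℝ) := by
      rw [hK]
      have : A.card ≤ p := by simpa using Finset.card_le_univ A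
      exact_mod_cast this
    have hP0 : (0:ℝ) < p := by exact_mod_cast hp.pos
    exact final_real hε hδ hA hδp hεδp hP0 hCR hch
end

section
/- Let T be a tournament on a vertex set V. Then for any four distinct vertices of V, at most two of the four 3-element subsets of these four vertices are cyclic triples of T. Consequently, the 3-uniform hypergraph on V whose edges are exactly the cyclic triples of T contains no K₄⁻ as a subgraph. -/
open scoped Classical

def IsCyclicTriple {V : Type*} [DecidableEq V] (T : V → V → Prop) (s : Finset V) : Prop :=
  ∃ a b c : V, a ≠ b ∧ a ≠ c ∧ b ≠ c ∧ s = {a, b, c} ∧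
    ((T a b ∧ T b c ∧ T c a) ∨ (T b a ∧ T c b ∧ T a c))

section Aux
variable {V : Type*} [DecidableEq V] (T : V → V → Prop)

def CycP (a b c : V) : Prop := (T a b ∧ T b c ∧ T c a) ∨ (T b a ∧ T c b ∧ T a c)

lemma cycP_rot {a b c : V} : CycP T a b c ↔ CycP T b c a := by
  unfold CycP; tauto

lemma cycP_swap {a b c : V} : CycP T a b c ↔ CycP T a c b := by
  unfold CycP; tauto

lemma triple_iff {a b c : V} (hab : a ≠ b) (hac : a ≠ c) (hbc : b ≠ c) :
    IsCyclicTriple T {a, b, c} ↔ CycP T a b c := by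
  constructor
  · rintro ⟨x, y, z, hxy, hxz, hyz, hs, hP⟩
    have hx : x ∈ ({a, b, c} : Finset V) := by rw [hs]; simp
    have hy : y ∈ ({a, b, c} : Finset V) := by rw [hs]; simp
    have hz : z ∈ ({a, b, c} : Finset V) := by rw [hs]; simp
    simp only [Finset.mem_insert, Finset.mem_singleton] at hx hy hz
    have hP' : CycP T x y z := hP
    rcases hx with rfl | rfl | rfl <;> rcases hy with rfl | rfl | rfl <;>
      rcases hz with rfl | rfl | rfl <;>
      simp_all [cycP_rot, cycP_swap] <;>
      first
        | exact hP'
        | exact (cycP_rot T).mp hP'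
        | exact (cycP_rot T).mp ((cycP_rot T).mp hP')
        | exact (cycP_swap T).mp hP'
        | exact (cycP_swap T).mp ((cycP_rot T).mp hP')
        | exact (cycP_swap T).mp ((cycP_rot T).mp ((cycP_rot T).mp hP'))
  · intro h
    exact ⟨a, b, c, hab, hac, hbc, rfl, h⟩

lemma no_three {a b c d : V} (hT : ∀ u v : V, u ≠ v → (T u v ↔ ¬ T v u))
    (hab : a ≠ b) (hac : a ≠ c) (had : a ≠ d) (hbc : b ≠ c) (hbd : b ≠ d) (hcd : c ≠ d) :
    ¬(CycP T a b c ∧ CycP T a b d ∧ CycP T a c d) ∧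
    ¬(CycP T a b c ∧ CycP T a b d ∧ CycP T b c d) ∧
    ¬(CycP T a b c ∧ CycP T a c d ∧ CycP T b c d) ∧
    ¬(CycP T a b d ∧ CycP T a c d ∧ CycP T b c d) := by
  unfold CycP
  refine ⟨?_, ?_, ?_, ?_⟩ <;>
    · simp only [hT b a (Ne.symm hab), hT c a (Ne.symm hac), hT d a (Ne.symm had),
        hT c b (Ne.symm hbc), hT d b (Ne.symm hbd), hT d c (Ne.symm hcd)]
      rintro ⟨h1 | h1, h2 | h2, h3 | h3⟩ <;> tauto

lemma card_filter_le {α : Type*} [DecidableEq α] (p : α → Prop) [DecidablePred p]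
    (s1 s2 s3 s4 : α)
    (h1 : ¬(p s1 ∧ p s2 ∧ p s3)) (h2 : ¬(p s1 ∧ p s2 ∧ p s4))
    (h3 : ¬(p s1 ∧ p s3 ∧ p s4)) (h4 : ¬(p s2 ∧ p s3 ∧ p s4)) :
    (({s1, s2, s3, s4} : Finset α).filter p).card ≤ 2 := by
  by_cases q1 : p s1 <;> by_cases q2 : p s2 <;> by_cases q3 : p s3 <;> by_cases q4 : p s4 <;>
    simp_all [Finset.filter_insert, Finset.filter_singleton] <;>
    first
      | exact (Finset.card_insert_le _ _).trans (by simp [Finset.card_insert_le])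
      | exact Finset.card_le_one.mpr (by simp) |>.trans (by norm_num)
      | simp [Finset.card_insert_le]
end Aux

/-- For a tournament `T` on `V`, any four distinct vertices contain at most two
cyclic triples among the four 3-element subsets; consequently, the 3-uniform
hypergraph of cyclic triples of `T` contains no `K₄⁻`. -/
theorem cyclic_triples_K4minus_free {V : Type*} [DecidableEq V]
    (T : V → V → Prop) (hT : ∀ u v : V, u ≠ v → (T u v ↔ ¬ T v u)) :
    (∀ a b c d : V, a ≠ b → a ≠ c → a ≠ d → b ≠ c → b ≠ d → c ≠ d →
      (({({a, b, c} : Finset V), {a, b, d}, {a, c, d}, {b, c, d}} :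
          Finset (Finset V)).filter (IsCyclicTriple T)).card ≤ 2) ∧
    (∀ s : Finset V, s.card = 4 →
      ((s.powersetCard 3).filter (IsCyclicTriple T)).card ≤ 2) := by
  have main : ∀ a b c d : V, a ≠ b → a ≠ c → a ≠ d → b ≠ c → b ≠ d → c ≠ d →
      (({({a, b, c} : Finset V), {a, b, d}, {a, c, d}, {b, c, d}} :
          Finset (Finset V)).filter (IsCyclicTriple T)).card ≤ 2 := by
    intro a b c d hab hac had hbc hbd hcd
    obtain ⟨n1, n2, n3, n4⟩ := no_three T hT hab hac had hbc hbd hcd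
    apply card_filter_le (IsCyclicTriple T) _ _ _ _
    · rw [triple_iff T hab hac hbc, triple_iff T hab had hbd, triple_iff T hac had hcd]
      exact n1
    · rw [triple_iff T hab hac hbc, triple_iff T hab had hbd, triple_iff T hbc hbd hcd]
      exact n2
    · rw [triple_iff T hab hac hbc, triple_iff T hac had hcd, triple_iff T hbc hbd hcd]
      exact n3
    · rw [triple_iff T hab had hbd, triple_iff T hac had hcd, triple_iff T hbc hbd hcd]
      exact n4
  refine ⟨main, ?_⟩
  intro s hs
  have hne : s.Nonempty := by rw [← Finset.card_pos, hs]; norm_num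
  obtain ⟨a, ha⟩ := hne
  have h3 : (s.erase a).card = 3 := by rw [Finset.card_erase_of_mem ha, hs]
  obtain ⟨b, c, d, hbc, hbd, hcd, he⟩ := Finset.card_eq_three.mp h3
  have hab : a ≠ b := by intro h; subst h; exact (Finset.notMem_erase a s) (he ▸ by simp)
  have hac : a ≠ c := by intro h; subst h; exact (Finset.notMem_erase a s) (he ▸ by simp)
  have had : a ≠ d := by intro h; subst h; exact (Finset.notMem_erase a s) (he ▸ by simp)
  have hseq : s = {a, b, c, d} := by
    rw [← Finset.insert_erase ha, he]
  have hsub : s.powersetCard 3 ⊆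
      {({a, b, c} : Finset V), {a, b, d}, {a, c, d}, {b, c, d}} := by
    intro t ht
    rw [Finset.mem_powersetCard] at ht
    obtain ⟨hts, htc⟩ := ht
    have h1 : (s \ t).card = 1 := by
      rw [Finset.card_sdiff_of_subset hts, hs, htc]
    obtain ⟨x, hx⟩ := Finset.card_eq_one.mp h1
    have hxs : x ∈ s := by
      have : x ∈ s \ t := hx ▸ Finset.mem_singleton_self x
      exact (Finset.mem_sdiff.mp this).1
    have ht' : t = s.erase x := by
      have := Finset.sdiff_sdiff_eq_self hts
      rw [← this, hx, Finset.sdiff_singleton_eq_erase]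
    have e1 : ({a, b, c, d} : Finset V).erase a = {b, c, d} := by
      rw [Finset.erase_insert (by simp [hab, hac, had])]
    have e2 : ({a, b, c, d} : Finset V).erase b = {a, c, d} := by
      rw [Finset.erase_insert_of_ne hab, Finset.erase_insert (by simp [hbc, hbd])]
    have e3 : ({a, b, c, d} : Finset V).erase c = {a, b, d} := by
      rw [Finset.erase_insert_of_ne hac, Finset.erase_insert_of_ne hbc,
        Finset.erase_insert (by simp [hcd])]
    have e4 : ({a, b, c, d} : Finset V).erase d = {a, b, c} := by
      rw [Finset.erase_insert_of_ne had, Finset.erase_insert_of_ne hbd,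
        Finset.erase_insert_of_ne hcd]
      simp
    rw [hseq] at hxs
    simp only [Finset.mem_insert, Finset.mem_singleton] at hxs
    simp only [Finset.mem_insert, Finset.mem_singleton]
    rw [ht', hseq]
    rcases hxs with rfl | rfl | rfl | rfl
    · rw [e1]; tauto
    · rw [e2]; tauto
    · rw [e3]; tauto
    · rw [e4]; tauto
  calc ((s.powersetCard 3).filter (IsCyclicTriple T)).card
      ≤ (({({a, b, c} : Finset V), {a, b, d}, {a, c, d}, {b, c, d}} :
          Finset (Finset V)).filter (IsCyclicTriple T)).card :=
        Finset.card_le_card (Finset.filter_subset_filter _ hsub)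
    _ ≤ 2 := main a b c d hab hac had hbc hbd hcd
end

section
/- Let T be a tournament on a vertex set V, and let v, a, b, c, d be five distinct vertices of V such that both {v,a,b} and {v,c,d} are cyclic triples of T. Then there exists a third 3-element subset of {v,a,b,c,d}, distinct from {v,a,b} and {v,c,d}, that is also a cyclic triple of T. In particular, the 3-uniform hypergraph of cyclic triples of a tournament never contains an induced butterfly, i.e., five vertices spanning exactly two edges that share exactly one common vertex. -/
open scoped Classical

/-- Boolean cyclicity of a triple given edge booleans `e i j`, `e j k`, `e i k`. -/
def cycB (x y z : Bool) : Bool := (x && y && !z) || (!x && !y && z)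

lemma keyBool : ∀ (b01 b02 b03 b04 b12 b13 b14 b23 b24 b34 : Bool),
    cycB b01 b12 b02 = true → cycB b03 b34 b04 = true →
    (cycB b01 b13 b03 || cycB b01 b14 b04 || cycB b02 b23 b03 || cycB b02 b24 b04 ||
     cycB b12 b23 b13 || cycB b12 b24 b14 || cycB b13 b34 b14 || cycB b23 b34 b24) = true := by
  decide

lemma cycB_iff {V : Type*} (T : V → V → Prop) (hT : ∀ u v : V, u ≠ v → (T u v ↔ ¬ T v u))
    (x y z : V) (hxy : x ≠ y) (hxz : x ≠ z) (hyz : y ≠ z) :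
    cycB (decide (T x y)) (decide (T y z)) (decide (T x z)) = true ↔
      ((T x y ∧ T y z ∧ T z x) ∨ (T y x ∧ T z y ∧ T x z)) := by
  have h1 := hT x y hxy
  have h2 := hT y z hyz
  have h3 := hT x z hxz
  simp only [cycB, Bool.or_eq_true, Bool.and_eq_true, Bool.not_eq_true',
    decide_eq_true_iff, decide_eq_false_iff_not]
  tauto

lemma cyc_of_triple {V : Type*} [DecidableEq V] (T : V → V → Prop) {v a b : V}
    (hva : v ≠ a) (hvb : v ≠ b) (hab : a ≠ b) (h : IsCyclicTriple T {v, a, b}) :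
    (T v a ∧ T a b ∧ T b v) ∨ (T a v ∧ T b a ∧ T v b) := by
  obtain ⟨x, y, z, hxy, hxz, hyz, hs, hcyc⟩ := h
  have hx : x = v ∨ x = a ∨ x = b := by
    have : x ∈ ({v, a, b} : Finset V) := hs ▸ (by simp)
    simpa using this
  have hy : y = v ∨ y = a ∨ y = b := by
    have : y ∈ ({v, a, b} : Finset V) := hs ▸ (by simp)
    simpa using this
  have hz : z = v ∨ z = a ∨ z = b := by
    have : z ∈ ({v, a, b} : Finset V) := hs ▸ (by simp)
    simpa using this
  rcases hx with rfl | rfl | rfl <;> rcases hy with rfl | rfl | rfl <;>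
    rcases hz with rfl | rfl | rfl <;> tauto

lemma ne_of_mem_not_mem {α : Type*} [DecidableEq α] {s t : Finset α} {x : α}
    (hx : x ∈ s) (hx' : x ∉ t) : s ≠ t := fun h => hx' (h ▸ hx)

lemma mk_triple {V : Type*} [DecidableEq V] (T : V → V → Prop) {x y z : V}
    (hxy : x ≠ y) (hxz : x ≠ z) (hyz : y ≠ z)
    (h : (T x y ∧ T y z ∧ T z x) ∨ (T y x ∧ T z y ∧ T x z)) :
    IsCyclicTriple T {x, y, z} := ⟨x, y, z, hxy, hxz, hyz, rfl, h⟩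

lemma three_mem {α : Type*} [DecidableEq α] {s : Finset α} {v : α}
    (h3 : s.card = 3) (hv : v ∈ s) :
    ∃ a b, v ≠ a ∧ v ≠ b ∧ a ≠ b ∧ s = {v, a, b} := by
  have h2 : (s.erase v).card = 2 := by rw [Finset.card_erase_of_mem hv, h3]
  obtain ⟨a, b, hab, he⟩ := Finset.card_eq_two.mp h2
  have ha : a ∈ s.erase v := by rw [he]; simp
  have hb : b ∈ s.erase v := by rw [he]; simp
  refine ⟨a, b, (Finset.ne_of_mem_erase ha).symm, (Finset.ne_of_mem_erase hb).symm, hab, ?_⟩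
  rw [← Finset.insert_erase hv, he]

/-- If `{v,a,b}` and `{v,c,d}` are cyclic triples of a tournament `T` on five
distinct vertices `v,a,b,c,d`, then some third 3-element subset of
`{v,a,b,c,d}` is also a cyclic triple. In particular, the hypergraph of
cyclic triples of a tournament never contains an induced butterfly: five
vertices spanning exactly two edges sharing exactly one vertex. -/
theorem cyclic_triples_butterfly_free {V : Type*} [DecidableEq V]
    (T : V → V → Prop) (hT : ∀ u v : V, u ≠ v → (T u v ↔ ¬ T v u)) :
    (∀ v a b c d : V,
      v ≠ a → v ≠ b → v ≠ c → v ≠ d → a ≠ b → a ≠ c → a ≠ d → b ≠ c → b ≠ d → c ≠ d →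
      IsCyclicTriple T {v, a, b} → IsCyclicTriple T {v, c, d} →
      ∃ s : Finset V, s ⊆ {v, a, b, c, d} ∧ s.card = 3 ∧
        s ≠ {v, a, b} ∧ s ≠ {v, c, d} ∧ IsCyclicTriple T s) ∧
    ¬ ∃ (u : Finset V) (e₁ e₂ : Finset V), u.card = 5 ∧ e₁ ≠ e₂ ∧
        (e₁ ∩ e₂).card = 1 ∧
        (u.powersetCard 3).filter (IsCyclicTriple T) = {e₁, e₂} := by
  have part1 : ∀ v a b c d : V,
      v ≠ a → v ≠ b → v ≠ c → v ≠ d → a ≠ b → a ≠ c → a ≠ d → b ≠ c → b ≠ d → c ≠ d →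
      IsCyclicTriple T {v, a, b} → IsCyclicTriple T {v, c, d} →
      ∃ s : Finset V, s ⊆ {v, a, b, c, d} ∧ s.card = 3 ∧
        s ≠ {v, a, b} ∧ s ≠ {v, c, d} ∧ IsCyclicTriple T s := by
    intro v a b c d hva hvb hvc hvd hab hac had hbc hbd hcd h1 h2
    have hc1 : cycB (decide (T v a)) (decide (T a b)) (decide (T v b)) = true :=
      (cycB_iff T hT v a b hva hvb hab).mpr (cyc_of_triple T hva hvb hab h1)
    have hc2 : cycB (decide (T v c)) (decide (T c d)) (decide (T v d)) = true :=
      (cycB_iff T hT v c d hvc hvd hcd).mpr (cyc_of_triple T hvc hvd hcd h2)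
    have hkey := keyBool (decide (T v a)) (decide (T v b)) (decide (T v c)) (decide (T v d))
      (decide (T a b)) (decide (T a c)) (decide (T a d)) (decide (T b c)) (decide (T b d))
      (decide (T c d)) hc1 hc2
    simp only [Bool.or_eq_true] at hkey
    rcases hkey with ((((((h | h) | h) | h) | h) | h) | h) | h
    · -- {v, a, c}
      refine ⟨{v, a, c}, ?_, Finset.card_eq_three.mpr ⟨v, a, c, hva, hvc, hac, rfl⟩,
        ne_of_mem_not_mem (x := c) (by simp) (by simp [hvc.symm, hac.symm, hbc.symm]),
        ne_of_mem_not_mem (x := a) (by simp) (by simp [hva.symm, hac, had]),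
        mk_triple T hva hvc hac ((cycB_iff T hT v a c hva hvc hac).mp h)⟩
      intro t ht; simp at ht ⊢; tauto
    · -- {v, a, d}
      refine ⟨{v, a, d}, ?_, Finset.card_eq_three.mpr ⟨v, a, d, hva, hvd, had, rfl⟩,
        ne_of_mem_not_mem (x := d) (by simp) (by simp [hvd.symm, had.symm, hbd.symm]),
        ne_of_mem_not_mem (x := a) (by simp) (by simp [hva.symm, hac, had]),
        mk_triple T hva hvd had ((cycB_iff T hT v a d hva hvd had).mp h)⟩
      intro t ht; simp at ht ⊢; tauto
    · -- {v, b, c}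
      refine ⟨{v, b, c}, ?_, Finset.card_eq_three.mpr ⟨v, b, c, hvb, hvc, hbc, rfl⟩,
        ne_of_mem_not_mem (x := c) (by simp) (by simp [hvc.symm, hac.symm, hbc.symm]),
        ne_of_mem_not_mem (x := b) (by simp) (by simp [hvb.symm, hbc, hbd]),
        mk_triple T hvb hvc hbc ((cycB_iff T hT v b c hvb hvc hbc).mp h)⟩
      intro t ht; simp at ht ⊢; tauto
    · -- {v, b, d}
      refine ⟨{v, b, d}, ?_, Finset.card_eq_three.mpr ⟨v, b, d, hvb, hvd, hbd, rfl⟩,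
        ne_of_mem_not_mem (x := d) (by simp) (by simp [hvd.symm, had.symm, hbd.symm]),
        ne_of_mem_not_mem (x := b) (by simp) (by simp [hvb.symm, hbc, hbd]),
        mk_triple T hvb hvd hbd ((cycB_iff T hT v b d hvb hvd hbd).mp h)⟩
      intro t ht; simp at ht ⊢; tauto
    · -- {a, b, c}
      refine ⟨{a, b, c}, ?_, Finset.card_eq_three.mpr ⟨a, b, c, hab, hac, hbc, rfl⟩,
        ne_of_mem_not_mem (x := c) (by simp) (by simp [hvc.symm, hac.symm, hbc.symm]),
        ne_of_mem_not_mem (x := a) (by simp) (by simp [hva.symm, hac, had]),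
        mk_triple T hab hac hbc ((cycB_iff T hT a b c hab hac hbc).mp h)⟩
      intro t ht; simp at ht ⊢; tauto
    · -- {a, b, d}
      refine ⟨{a, b, d}, ?_, Finset.card_eq_three.mpr ⟨a, b, d, hab, had, hbd, rfl⟩,
        ne_of_mem_not_mem (x := d) (by simp) (by simp [hvd.symm, had.symm, hbd.symm]),
        ne_of_mem_not_mem (x := a) (by simp) (by simp [hva.symm, hac, had]),
        mk_triple T hab had hbd ((cycB_iff T hT a b d hab had hbd).mp h)⟩
      intro t ht; simp at ht ⊢; tauto
    · -- {a, c, d}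
      refine ⟨{a, c, d}, ?_, Finset.card_eq_three.mpr ⟨a, c, d, hac, had, hcd, rfl⟩,
        ne_of_mem_not_mem (x := c) (by simp) (by simp [hvc.symm, hac.symm, hbc.symm]),
        ne_of_mem_not_mem (x := a) (by simp) (by simp [hva.symm, hac, had]),
        mk_triple T hac had hcd ((cycB_iff T hT a c d hac had hcd).mp h)⟩
      intro t ht; simp at ht ⊢; tauto
    · -- {b, c, d}
      refine ⟨{b, c, d}, ?_, Finset.card_eq_three.mpr ⟨b, c, d, hbc, hbd, hcd, rfl⟩,
        ne_of_mem_not_mem (x := c) (by simp) (by simp [hvc.symm, hac.symm, hbc.symm]),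
        ne_of_mem_not_mem (x := b) (by simp) (by simp [hvb.symm, hbc, hbd]),
        mk_triple T hbc hbd hcd ((cycB_iff T hT b c d hbc hbd hcd).mp h)⟩
      intro t ht; simp at ht ⊢; tauto
  refine ⟨part1, ?_⟩
  rintro ⟨u, e₁, e₂, hu5, hne, hint, hfilter⟩
  have he1 : e₁ ∈ (u.powersetCard 3).filter (IsCyclicTriple T) := by rw [hfilter]; simp
  have he2 : e₂ ∈ (u.powersetCard 3).filter (IsCyclicTriple T) := by rw [hfilter]; simp
  rw [Finset.mem_filter, Finset.mem_powersetCard] at he1 he2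
  obtain ⟨⟨he1u, he1c⟩, he1cyc⟩ := he1
  obtain ⟨⟨he2u, he2c⟩, he2cyc⟩ := he2
  obtain ⟨v, hv⟩ := Finset.card_eq_one.mp hint
  have hv1 : v ∈ e₁ := Finset.mem_of_mem_inter_left (hv ▸ Finset.mem_singleton_self v)
  have hv2 : v ∈ e₂ := Finset.mem_of_mem_inter_right (hv ▸ Finset.mem_singleton_self v)
  obtain ⟨a, b, hva, hvb, hab, he1eq⟩ := three_mem he1c hv1
  obtain ⟨c, d, hvc, hvd, hcd, he2eq⟩ := three_mem he2c hv2
  have hmem1 : ∀ x, x ∈ e₁ → x ∈ e₂ → x = v := by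
    intro x hx hx'
    have : x ∈ e₁ ∩ e₂ := Finset.mem_inter.mpr ⟨hx, hx'⟩
    rw [hv] at this; simpa using this
  have ha1 : a ∈ e₁ := by rw [he1eq]; simp
  have hb1 : b ∈ e₁ := by rw [he1eq]; simp
  have hc2m : c ∈ e₂ := by rw [he2eq]; simp
  have hd2m : d ∈ e₂ := by rw [he2eq]; simp
  have hac : a ≠ c := fun h => hva (hmem1 a ha1 (h ▸ hc2m)).symm
  have had : a ≠ d := fun h => hva (hmem1 a ha1 (h ▸ hd2m)).symm
  have hbc : b ≠ c := fun h => hvb (hmem1 b hb1 (h ▸ hc2m)).symm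
  have hbd : b ≠ d := fun h => hvb (hmem1 b hb1 (h ▸ hd2m)).symm
  obtain ⟨s, hsub, hcard, hne1, hne2, hcyc⟩ :=
    part1 v a b c d hva hvb hvc hvd hab hac had hbc hbd hcd
      (he1eq ▸ he1cyc) (he2eq ▸ he2cyc)
  have hsu : s ⊆ u := by
    refine hsub.trans ?_
    intro x hx
    simp only [Finset.mem_insert, Finset.mem_singleton] at hx
    rcases hx with rfl | rfl | rfl | rfl | rfl
    · exact he1u hv1
    · exact he1u ha1
    · exact he1u hb1
    · exact he2u hc2m
    · exact he2u hd2m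
  have hs : s ∈ (u.powersetCard 3).filter (IsCyclicTriple T) :=
    Finset.mem_filter.mpr ⟨Finset.mem_powersetCard.mpr ⟨hsu, hcard⟩, hcyc⟩
  rw [hfilter] at hs
  simp only [Finset.mem_insert, Finset.mem_singleton] at hs
  rcases hs with rfl | rfl
  · exact hne1 he1eq
  · exact hne2 he2eq
end

section
/- Let n ≥ 4 and let H be a 3-uniform hypergraph on n vertices such that no two distinct edges of H intersect in exactly one vertex (equivalently, H contains no butterfly as a not-necessarily-induced subgraph). Then H has at most n(n−1)/3 edges. In particular, the edge density of such hypergraphs tends to zero as n tends to infinity. -/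
open Filter Finset

/-- An intersecting family of 2-element subsets of `Fin n` (`n ≥ 4`) has at
most `n - 1` members (it is a star or a triangle). -/
lemma intersecting_pairs_card {n : ℕ} (hn : 4 ≤ n) (F : Finset (Finset (Fin n)))
    (h2 : ∀ e ∈ F, e.card = 2)
    (hint : ∀ e₁ ∈ F, ∀ e₂ ∈ F, (e₁ ∩ e₂).Nonempty) :
    F.card ≤ n - 1 := by
  by_cases hstar : ∃ x : Fin n, ∀ e ∈ F, x ∈ e
  · obtain ⟨x, hx⟩ := hstar
    have : F.card ≤ ((Finset.univ.erase x).powersetCard 1).card := by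
      apply Finset.card_le_card_of_injOn (fun e => e.erase x)
      · intro e he
        simp only [Finset.mem_coe, Finset.mem_powersetCard]
        constructor
        · intro y hy
          simp only [Finset.mem_erase] at hy ⊢
          exact ⟨hy.1, Finset.mem_univ _⟩
        · rw [Finset.card_erase_of_mem (hx e he), h2 e he]
      · intro e₁ h₁ e₂ h₂' h
        have h' : insert x (e₁.erase x) = insert x (e₂.erase x) := congrArg (insert x) h
        rwa [Finset.insert_erase (hx e₁ h₁), Finset.insert_erase (hx e₂ h₂')] at h'
    rw [Finset.card_powersetCard, Finset.card_erase_of_mem (Finset.mem_univ x),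
      Finset.card_univ, Fintype.card_fin, Nat.choose_one_right] at this
    exact this
  · -- not a star: then F is contained in a triangle
    push_neg at hstar
    have hne : F.Nonempty := by
      by_contra h
      rw [Finset.not_nonempty_iff_eq_empty] at h
      obtain ⟨e, he, _⟩ := hstar ⟨0, by omega⟩
      simp [h] at he
    obtain ⟨e₁, he₁⟩ := hne
    obtain ⟨a, b, hab, he₁e⟩ := Finset.card_eq_two.mp (h2 e₁ he₁)
    obtain ⟨e₂, he₂, ha2⟩ := hstar a
    have hb2 : b ∈ e₂ := by
      obtain ⟨y, hy⟩ := hint e₁ he₁ e₂ he₂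
      simp only [Finset.mem_inter, he₁e, Finset.mem_insert, Finset.mem_singleton] at hy
      rcases hy.1 with h | h
      · exact absurd (h ▸ hy.2) ha2
      · exact h ▸ hy.2
    obtain ⟨b', c, hbc, he₂e⟩ := Finset.card_eq_two.mp (h2 e₂ he₂)
    have hb'c : b ∈ ({b', c} : Finset (Fin n)) := he₂e ▸ hb2
    simp only [Finset.mem_insert, Finset.mem_singleton] at hb'c
    have he₂bc : ∃ c', c' ≠ b ∧ c' ≠ a ∧ e₂ = {b, c'} := by
      rcases hb'c with rfl | rfl
      · refine ⟨c, fun h => hbc h.symm, ?_, he₂e⟩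
        intro h; subst h; apply ha2; rw [he₂e]; simp
      · refine ⟨b', ?_, ?_, by rw [he₂e, Finset.pair_comm]⟩
        · intro h; exact hbc h
        · intro h; subst h; apply ha2; rw [he₂e]; simp
    obtain ⟨c, hcb, hca, he₂e'⟩ := he₂bc
    obtain ⟨e₃, he₃, hb3⟩ := hstar b
    have ha3 : a ∈ e₃ := by
      obtain ⟨y, hy⟩ := hint e₁ he₁ e₃ he₃
      simp only [Finset.mem_inter, he₁e, Finset.mem_insert, Finset.mem_singleton] at hy
      rcases hy.1 with h | h
      · exact h ▸ hy.2
      · exact absurd (h ▸ hy.2) hb3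
    have hc3 : c ∈ e₃ := by
      obtain ⟨y, hy⟩ := hint e₂ he₂ e₃ he₃
      simp only [Finset.mem_inter, he₂e', Finset.mem_insert, Finset.mem_singleton] at hy
      rcases hy.1 with h | h
      · exact absurd (h ▸ hy.2) hb3
      · exact h ▸ hy.2
    have he₃e : e₃ = {a, c} := by
      refine (Finset.eq_of_subset_of_card_le ?_ ?_).symm
      · intro z hz
        simp only [Finset.mem_insert, Finset.mem_singleton] at hz
        rcases hz with rfl | rfl <;> assumption
      · have hacc : ({a, c} : Finset (Fin n)).card = 2 := by
          rw [Finset.card_insert_of_notMem (by simp [Ne.symm hca]), Finset.card_singleton]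
        rw [h2 e₃ he₃, hacc]
    -- every member of F is a 2-subset of {a, b, c}
    have hsub : F ⊆ ({a, b, c} : Finset (Fin n)).powersetCard 2 := by
      intro e he
      rw [Finset.mem_powersetCard]
      refine ⟨?_, h2 e he⟩
      intro y hy
      by_contra hy'
      simp only [Finset.mem_insert, Finset.mem_singleton, not_or] at hy'
      obtain ⟨u, v, huv, hee⟩ := Finset.card_eq_two.mp (h2 e he)
      -- y is u or v; let z be the other
      have hyuv : y = u ∨ y = v := by
        have := hee ▸ hy; simpa using this
      obtain ⟨z, hze, hzy⟩ : ∃ z, e = {y, z} ∧ z ≠ y := by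
        rcases hyuv with rfl | rfl
        · exact ⟨v, hee, fun h => huv h.symm⟩
        · exact ⟨u, by rw [hee, Finset.pair_comm], huv⟩
      have hz1 : z ∈ e₁ := by
        obtain ⟨w, hw⟩ := hint e he e₁ he₁
        simp only [Finset.mem_inter, hze, he₁e, Finset.mem_insert,
          Finset.mem_singleton] at hw
        rcases hw.1 with rfl | rfl
        · rcases hw.2 with h | h
          · exact absurd h hy'.1
          · exact absurd h hy'.2.1
        · rw [he₁e]; simpa using hw.2
      have hz2 : z ∈ e₂ := by
        obtain ⟨w, hw⟩ := hint e he e₂ he₂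
        simp only [Finset.mem_inter, hze, he₂e', Finset.mem_insert,
          Finset.mem_singleton] at hw
        rcases hw.1 with rfl | rfl
        · rcases hw.2 with h | h
          · exact absurd h hy'.2.1
          · exact absurd h hy'.2.2
        · rw [he₂e']; simpa using hw.2
      have hz3 : z ∈ e₃ := by
        obtain ⟨w, hw⟩ := hint e he e₃ he₃
        simp only [Finset.mem_inter, hze, he₃e, Finset.mem_insert,
          Finset.mem_singleton] at hw
        rcases hw.1 with rfl | rfl
        · rcases hw.2 with h | h
          · exact absurd h hy'.1
          · exact absurd h hy'.2.2
        · rw [he₃e]; simpa using hw.2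
      rw [he₁e] at hz1; rw [he₂e'] at hz2; rw [he₃e] at hz3
      simp only [Finset.mem_insert, Finset.mem_singleton] at hz1 hz2 hz3
      rcases hz1 with rfl | rfl
      · rcases hz2 with h | h
        · exact hab h
        · exact hca h.symm
      · rcases hz3 with h | h
        · exact hab h.symm
        · exact hcb h.symm
    have h3 : F.card ≤ 3 := by
      have := Finset.card_le_card hsub
      have hc3' : ({a, b, c} : Finset (Fin n)).card ≤ 3 := Finset.card_insert_le _ _ |>.trans
        (Nat.succ_le_succ ((Finset.card_insert_le _ _).trans (by simp)))
      calc F.card ≤ (({a, b, c} : Finset (Fin n)).powersetCard 2).card := this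
        _ = (({a, b, c} : Finset (Fin n)).card).choose 2 := Finset.card_powersetCard _ _
        _ ≤ Nat.choose 3 2 := Nat.choose_le_choose _ hc3'
        _ = 3 := by norm_num
    omega

/-- The key counting bound. -/
lemma butterfly_free_count {n : ℕ} (hn : 4 ≤ n) (E : Finset (Finset (Fin n)))
    (h3 : ∀ e ∈ E, e.card = 3)
    (hb : ∀ e₁ ∈ E, ∀ e₂ ∈ E, e₁ ≠ e₂ → (e₁ ∩ e₂).card ≠ 1) :
    3 * E.card ≤ n * (n - 1) := by
  have hdeg : ∀ v : Fin n, (E.filter (fun e => v ∈ e)).card ≤ n - 1 := by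
    intro v
    set F := (E.filter (fun e => v ∈ e)).image (fun e => e.erase v) with hF
    have hinj : ∀ e₁ ∈ E.filter (fun e => v ∈ e), ∀ e₂ ∈ E.filter (fun e => v ∈ e),
        e₁.erase v = e₂.erase v → e₁ = e₂ := by
      intro e₁ h₁ e₂ h₂ h
      simp only [Finset.mem_filter] at h₁ h₂
      have : insert v (e₁.erase v) = insert v (e₂.erase v) := by rw [h]
      rwa [Finset.insert_erase h₁.2, Finset.insert_erase h₂.2] at this
    have hcard : F.card = (E.filter (fun e => v ∈ e)).card :=
      Finset.card_image_of_injOn hinj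
    rw [← hcard]
    apply intersecting_pairs_card hn
    · intro e he
      simp only [hF, Finset.mem_image, Finset.mem_filter] at he
      obtain ⟨e', ⟨he', hv⟩, rfl⟩ := he
      rw [Finset.card_erase_of_mem hv, h3 e' he']
    · intro f₁ hf₁ f₂ hf₂
      simp only [hF, Finset.mem_image, Finset.mem_filter] at hf₁ hf₂
      obtain ⟨e₁, ⟨he₁, hv₁⟩, rfl⟩ := hf₁
      obtain ⟨e₂, ⟨he₂, hv₂⟩, rfl⟩ := hf₂
      by_cases heq : e₁ = e₂
      · subst heq
        refine Finset.card_pos.mp ?_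
        rw [Finset.inter_self, Finset.card_erase_of_mem hv₁, h3 e₁ he₁]
        norm_num
      · have h2le : 2 ≤ (e₁ ∩ e₂).card := by
          have h1 : 1 ≤ (e₁ ∩ e₂).card := Finset.card_pos.mpr
            ⟨v, Finset.mem_inter.mpr ⟨hv₁, hv₂⟩⟩
          have := hb e₁ he₁ e₂ he₂ heq
          omega
        obtain ⟨w, hw, hwv⟩ := Finset.exists_mem_ne (s := e₁ ∩ e₂) (by omega) v
        rw [Finset.mem_inter] at hw
        exact ⟨w, Finset.mem_inter.mpr ⟨Finset.mem_erase.mpr ⟨hwv, hw.1⟩,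
          Finset.mem_erase.mpr ⟨hwv, hw.2⟩⟩⟩
  have hsum : ∑ v : Fin n, (E.filter (fun e => v ∈ e)).card = 3 * E.card := by
    have : ∑ v : Fin n, (E.filter (fun e => v ∈ e)).card
        = ∑ e ∈ E, e.card := by
      simp only [Finset.card_filter]
      rw [Finset.sum_comm]
      congr 1
      ext e
      simp [Finset.card_filter, Finset.filter_mem_eq_inter]
    rw [this, Finset.sum_congr rfl h3, Finset.sum_const, smul_eq_mul, mul_comm]
  calc 3 * E.card = ∑ v : Fin n, (E.filter (fun e => v ∈ e)).card := hsum.symm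
    _ ≤ ∑ _v : Fin n, (n - 1) := Finset.sum_le_sum fun v _ => hdeg v
    _ = n * (n - 1) := by simp [Finset.sum_const, Finset.card_univ, mul_comm]

lemma six_choose_three (n : ℕ) : 6 * n.choose 3 = n * (n - 1) * (n - 2) := by
  have h := Nat.descFactorial_eq_factorial_mul_choose n 3
  simp [Nat.descFactorial_succ, Nat.descFactorial_zero, Nat.factorial] at h
  rw [← h]
  ring

/-- A 3-uniform hypergraph on `n ≥ 4` vertices in which no two distinct edges
intersect in exactly one vertex (no butterfly subgraph) has at most
`n(n−1)/3` edges; in particular, the edge density of such hypergraphs tends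
to zero as `n → ∞`. -/
theorem butterfly_free_few_edges :
    (∀ n : ℕ, 4 ≤ n → ∀ E : Finset (Finset (Fin n)),
      (∀ e ∈ E, e.card = 3) →
      (∀ e₁ ∈ E, ∀ e₂ ∈ E, e₁ ≠ e₂ → (e₁ ∩ e₂).card ≠ 1) →
      (E.card : ℝ) ≤ (n : ℝ) * ((n : ℝ) - 1) / 3) ∧
    (∀ E : (n : ℕ) → Finset (Finset (Fin n)),
      (∀ n, ∀ e ∈ E n, e.card = 3) →
      (∀ n, ∀ e₁ ∈ E n, ∀ e₂ ∈ E n, e₁ ≠ e₂ → (e₁ ∩ e₂).card ≠ 1) →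
      Tendsto (fun n : ℕ => ((E n).card : ℝ) / (n.choose 3 : ℝ)) atTop (nhds 0)) := by
  constructor
  · intro n hn E h3 hb
    have h := butterfly_free_count hn E h3 hb
    have hcast : (3 : ℝ) * E.card ≤ (n : ℝ) * ((n : ℝ) - 1) := by
      have h1 : ((3 * E.card : ℕ) : ℝ) ≤ ((n * (n - 1) : ℕ) : ℝ) := by exact_mod_cast h
      push_cast [Nat.cast_sub (by omega : 1 ≤ n)] at h1
      linarith
    linarith
  · intro E h3 hb
    apply squeeze_zero' (g := fun n : ℕ => 2 / ((n : ℝ) - 2))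
    · filter_upwards with n
      positivity
    · filter_upwards [eventually_ge_atTop 4] with n hn
      have h := butterfly_free_count hn (E n) (h3 n) (hb n)
      have hch : (0 : ℝ) < (n.choose 3 : ℝ) := by
        have : 0 < n.choose 3 := Nat.choose_pos (by omega)
        exact_mod_cast this
      have hn2 : (0 : ℝ) < (n : ℝ) - 2 := by
        have : (4 : ℝ) ≤ (n : ℝ) := by exact_mod_cast hn
        linarith
      rw [div_le_div_iff₀ hch hn2]
      have hnat : (E n).card * (n - 2) * 3 ≤ 6 * n.choose 3 := by
        rw [six_choose_three]
        calc (E n).card * (n - 2) * 3 = (3 * (E n).card) * (n - 2) := by ring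
          _ ≤ (n * (n - 1)) * (n - 2) := Nat.mul_le_mul_right _ h
      have hcast : ((E n).card : ℝ) * ((n : ℝ) - 2) * 3 ≤ 6 * (n.choose 3 : ℝ) := by
        have := (Nat.cast_le (α := ℝ)).mpr hnat
        push_cast [Nat.cast_sub (by omega : 2 ≤ n)] at this
        linarith
      linarith
    · have h1 : Tendsto (fun n : ℕ => (n : ℝ) + (-2)) atTop atTop :=
        tendsto_atTop_add_const_right atTop (-2) tendsto_natCast_atTop_atTop
      have h2 := (tendsto_inv_atTop_zero.comp h1).const_mul (2 : ℝ)
      simpa [Function.comp, sub_eq_add_neg, div_eq_mul_inv] using h2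
end

section
/- For every ε > 0 and every fixed finite graph F, there exist δ > 0 and a natural number n₀ such that every graph G on n ≥ n₀ vertices with the property that every subset A of the vertices with |A| ≥ δ·n induces at least ε·C(|A|,2) edges of G, contains F as a subgraph (i.e., G has a subgraph isomorphic to F). -/
open scoped Classical

private lemma halfcount_le_degsum {n : ℕ} (G : SimpleGraph (Fin n)) (A : Finset (Fin n)) :
    ((A ×ˢ A).filter (fun p => p.1 < p.2 ∧ G.Adj p.1 p.2)).card ≤
      ∑ v ∈ A, (A.filter (G.Adj v)).card := by
  rw [Finset.card_eq_sum_card_fiberwise (f := Prod.fst) (t := A)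
    (fun p hp => (Finset.mem_product.1 (Finset.mem_filter.1 hp).1).1)]
  refine Finset.sum_le_sum fun v hv => ?_
  refine Finset.card_le_card_of_injOn Prod.snd ?_ ?_
  · intro p hp
    simp only [Finset.mem_coe, Finset.mem_filter, Finset.mem_product] at hp ⊢
    obtain ⟨⟨⟨h1, h2⟩, _, h3⟩, h4⟩ := hp
    exact ⟨h2, h4 ▸ h3⟩
  · intro p hp q hq h
    simp only [Finset.coe_filter, Set.mem_setOf_eq, Finset.mem_filter] at hp hq
    exact Prod.ext (hp.2.trans hq.2.symm) h

private lemma clique_in_dense {n : ℕ} (G : SimpleGraph (Fin n)) (ε δ : ℝ)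
    (hε : 0 < ε) (hε1 : ε ≤ 1) (hδ : 0 < δ)
    (H : ∀ A : Finset (Fin n), δ * n ≤ (A.card : ℝ) →
      ε * (A.card.choose 2 : ℝ) ≤
        (((A ×ˢ A).filter (fun p => p.1 < p.2 ∧ G.Adj p.1 p.2)).card : ℝ))
    (hn : 2 ≤ δ * n) (k : ℕ) :
    ∀ S : Finset (Fin n), δ * (4/ε)^k * n ≤ (S.card : ℝ) →
      ∃ T : Finset (Fin n), T ⊆ S ∧ T.card = k ∧
        ∀ u ∈ T, ∀ v ∈ T, u ≠ v → G.Adj u v := by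
  have h4ε : (1:ℝ) ≤ 4/ε := by
    rw [le_div_iff₀ hε]; linarith
  induction k with
  | zero =>
    intro S _
    exact ⟨∅, Finset.empty_subset _, Finset.card_empty, by simp⟩
  | succ k ih =>
    intro S hS
    have hpow : (1:ℝ) ≤ (4/ε)^(k+1) := one_le_pow₀ h4ε
    have hpowk : (1:ℝ) ≤ (4/ε)^k := one_le_pow₀ h4ε
    have hn0 : (0:ℝ) ≤ n := Nat.cast_nonneg n
    have hδn : δ * n ≤ (S.card : ℝ) := by
      refine le_trans ?_ hS
      nlinarith [mul_nonneg (mul_nonneg hδ.le hn0) (sub_nonneg.2 hpow)]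
    have hScard2 : (2:ℝ) ≤ (S.card : ℝ) := le_trans hn hδn
    have hSne : S.Nonempty := by
      rw [← Finset.card_pos]
      exact_mod_cast lt_of_lt_of_le (by norm_num : (0:ℝ) < 2) hScard2
    -- find a vertex of large degree inside S
    have hsum : ε * ((S.card : ℝ) * ((S.card : ℝ) - 1) / 2) ≤
        ∑ v ∈ S, ((S.filter (G.Adj v)).card : ℝ) := by
      have h1 := H S hδn
      rw [Nat.cast_choose_two] at h1
      have h2 : ((((S ×ˢ S).filter (fun p => p.1 < p.2 ∧ G.Adj p.1 p.2)).card : ℝ)) ≤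
          ∑ v ∈ S, ((S.filter (G.Adj v)).card : ℝ) := by
        exact_mod_cast halfcount_le_degsum G S
      linarith
    have hex : ∃ v ∈ S, ε * ((S.card : ℝ) - 1) / 2 ≤ ((S.filter (G.Adj v)).card : ℝ) := by
      by_contra hcon
      push_neg at hcon
      have := Finset.sum_lt_sum_of_nonempty hSne hcon
      have hsum2 : ∑ v ∈ S, ((S.filter (G.Adj v)).card : ℝ) <
          (S.card : ℝ) * (ε * ((S.card : ℝ) - 1) / 2) := by
        calc ∑ v ∈ S, ((S.filter (G.Adj v)).card : ℝ)
            < ∑ _v ∈ S, ε * ((S.card : ℝ) - 1) / 2 := this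
          _ = (S.card : ℝ) * (ε * ((S.card : ℝ) - 1) / 2) := by
              rw [Finset.sum_const, nsmul_eq_mul]
      nlinarith
    obtain ⟨v, hvS, hvdeg⟩ := hex
    set S' := S.filter (G.Adj v) with hS'def
    have hS'sub : S' ⊆ S := Finset.filter_subset _ _
    have hS'card : δ * (4/ε)^k * n ≤ (S'.card : ℝ) := by
      have key : ε / 2 * (δ * (4/ε)^(k+1) * n) = 2 * (δ * (4/ε)^k * n) := by
        rw [pow_succ]
        field_simp
        ring
      have h1 : ε * ((S.card : ℝ) - 1) / 2 ≥ ε/2 * (δ * (4/ε)^(k+1) * n) - ε/2 := by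
        have : ε/2 * (δ * (4/ε)^(k+1) * n) ≤ ε/2 * (S.card : ℝ) := by
          apply mul_le_mul_of_nonneg_left hS (by linarith)
        linarith
      have h2 : (1:ℝ)*2 ≤ δ * (4/ε)^k * n := by
        calc (1:ℝ)*2 = 1*1*2 := by norm_num
          _ ≤ 1 * (4/ε)^k * (δ*n/2) * 2 := by
              apply mul_le_mul_of_nonneg_right _ (by norm_num)
              nlinarith
          _ = (4/ε)^k * (δ*n) := by ring
          _ = δ * (4/ε)^k * n := by ring
      nlinarith
    obtain ⟨T', hT'sub, hT'card, hT'cl⟩ := ih S' hS'card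
    have hvT' : v ∉ T' := by
      intro hv
      have := hT'sub hv
      rw [hS'def, Finset.mem_filter] at this
      exact G.irrefl this.2
    refine ⟨insert v T', ?_, ?_, ?_⟩
    · intro x hx
      rcases Finset.mem_insert.1 hx with rfl | hx
      · exact hvS
      · exact hS'sub (hT'sub hx)
    · rw [Finset.card_insert_of_notMem hvT', hT'card]
    · intro u hu w hw huw
      have adj : ∀ x ∈ T', G.Adj v x := fun x hx => (Finset.mem_filter.1 (hT'sub hx)).2
      rcases Finset.mem_insert.1 hu with hu' | hu' <;>
        rcases Finset.mem_insert.1 hw with hw' | hw'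
      · exact absurd (hu'.trans hw'.symm) huw
      · rw [hu']; exact adj w hw'
      · rw [hw']; exact (adj u hu').symm
      · exact hT'cl u hu' w hw' huw

/-- For every ε > 0 and fixed finite graph `F`, there exist δ > 0 and `n₀`
such that every graph `G` on `n ≥ n₀` vertices in which every vertex subset
`A` with `|A| ≥ δ·n` induces at least `ε·C(|A|,2)` edges contains `F` as a
subgraph. -/
theorem linear_density_graphs_contain_all_graphs :
    ∀ (k : ℕ) (F : SimpleGraph (Fin k)) (ε : ℝ), 0 < ε →
      ∃ δ : ℝ, 0 < δ ∧ ∃ n₀ : ℕ, ∀ n : ℕ, n₀ ≤ n →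
        ∀ G : SimpleGraph (Fin n),
          (∀ A : Finset (Fin n), δ * n ≤ (A.card : ℝ) →
            ε * (A.card.choose 2 : ℝ) ≤
              (((A ×ˢ A).filter (fun p => p.1 < p.2 ∧ G.Adj p.1 p.2)).card : ℝ)) →
          ∃ f : Fin k → Fin n, Function.Injective f ∧
            ∀ u v : Fin k, F.Adj u v → G.Adj (f u) (f v) := by
  intro k F ε hε
  set ε' := min ε 1 with hε'def
  have hε'pos : 0 < ε' := lt_min hε one_pos
  have hε'le1 : ε' ≤ 1 := min_le_right _ _
  have hε'leε : ε' ≤ ε := min_le_left _ _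
  set δ : ℝ := (ε'/4)^k with hδdef
  have hδpos : 0 < δ := pow_pos (by linarith) k
  refine ⟨δ, hδpos, ⌈2/δ⌉₊ + 1, fun n hn G H => ?_⟩
  have hnpos : (0:ℝ) < n := by
    have : 1 ≤ n := le_trans (Nat.le_add_left 1 _) hn
    exact_mod_cast Nat.lt_of_lt_of_le Nat.zero_lt_one this
  have hδn : 2 ≤ δ * n := by
    have h1 : 2/δ ≤ (⌈2/δ⌉₊ : ℝ) := Nat.le_ceil _
    have h2 : ((⌈2/δ⌉₊ : ℕ) : ℝ) ≤ (n : ℝ) := by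
      exact_mod_cast le_trans (Nat.le_succ _) hn
    have : 2/δ ≤ (n:ℝ) := le_trans h1 h2
    rw [div_le_iff₀ hδpos] at this
    linarith
  have H' : ∀ A : Finset (Fin n), δ * n ≤ (A.card : ℝ) →
      ε' * (A.card.choose 2 : ℝ) ≤
        (((A ×ˢ A).filter (fun p => p.1 < p.2 ∧ G.Adj p.1 p.2)).card : ℝ) := by
    intro A hA
    refine le_trans ?_ (H A hA)
    apply mul_le_mul_of_nonneg_right hε'leε (Nat.cast_nonneg _)
  have hpowid : δ * (4/ε')^k * (n:ℝ) = n := by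
    rw [hδdef, ← mul_pow]
    have : ε'/4 * (4/ε') = 1 := by field_simp
    rw [this, one_pow, one_mul]
  have huniv : δ * (4/ε')^k * (n:ℝ) ≤ ((Finset.univ : Finset (Fin n)).card : ℝ) := by
    rw [hpowid]
    simp
  obtain ⟨T, _, hTcard, hTcl⟩ :=
    clique_in_dense G ε' δ hε'pos hε'le1 hδpos H' hδn k Finset.univ huniv
  have e := T.orderIsoOfFin hTcard
  refine ⟨fun i => (e i : Fin n), ?_, ?_⟩
  · intro a b hab
    exact e.injective (Subtype.ext hab)
  · intro u v huv
    apply hTcl _ (e u).2 _ (e v).2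
    intro hcon
    exact F.irrefl (e.injective (Subtype.ext hcon) ▸ huv)
end
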